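/- Let K be a field of characteristic p > 0. There exists an injective ring homomorphism F_x : D(P_n) → D(P_n) (the canonical Frobenius) such that F_x(f) = f^p for every multiplication operator f ∈ P_n and F_x(∂^[α]) = ∂^[pα] for every α ∈ ℕ^n; equivalently, the K^{1/p}-semilinear assignment x^α ∂^[β] ↦ x^{pα} ∂^[pβ] on the basis, with λ ↦ λ^p on K, defines a ring endomorphism of D(P_n) extending the Frobenius a ↦ a^p of P_n. -/

import Mathlib

/-!
Write an exponent as `β = r + p • q` with all `r i < p`. Every polynomial is then uniquely a sum
of terms `x^r g^p`, and in characteristic `p` the map `g ↦ g^p` is additive and injective. So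
every operator `D` on `P_n` has a twist acting by `x^r g^p ↦ x^r (D g)^p`; twisting is additive,
multiplicative and injective on all of `End_K(P_n)`. It sends multiplication by `f` to
multiplication by `f^p` and, by Lucas's theorem `binom(r + p b, p a) ≡ binom(b, a) mod p`,
sends `∂^[α]` to `∂^[pα]`. Hence it preserves the generators of `D(P_n)` and restricts to `D(P_n)`.
-/

open MvPolynomial

variable (K : Type*) [Field K] (n : ℕ)

/-- The higher (Hasse) derivative `∂^[α]` on `P_n = K[x_1,…,x_n]`: the `K`-linear
endomorphism sending the monomial `x^β` to `(∏ i, binom(β_i, α_i)) x^{β-α}`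
(which is `0` unless `β ≥ α` componentwise). -/
noncomputable def hasse (α : Fin n →₀ ℕ) : Module.End K (MvPolynomial (Fin n) K) :=
  (basisMonomials (Fin n) K).constr K fun β : Fin n →₀ ℕ =>
    (∏ i, (β i).choose (α i)) • monomial (β - α) (1 : K)

/-- The multiplication operator `g ↦ f g` on `P_n`. -/
noncomputable def mulOp (f : MvPolynomial (Fin n) K) :
    Module.End K (MvPolynomial (Fin n) K) :=
  LinearMap.mulLeft K f

/-- The ring `D(P_n)` of differential operators on `P_n`: the `K`-subalgebra of
`End_K(P_n)` generated by the multiplication operators `x_1,…,x_n` and the higher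
derivatives `∂^[α]` (each `∂^[α]` is a product of the generators `∂_i^[k]`). -/
noncomputable def DiffOps : Subalgebra K (Module.End K (MvPolynomial (Fin n) K)) :=
  Algebra.adjoin K
    (Set.range (fun i : Fin n => mulOp K n (X i)) ∪ Set.range (hasse K n))

/-- The multiplication operator by `X i`, as an element of `D(P_n)`. -/
noncomputable def xOp (i : Fin n) : DiffOps K n :=
  ⟨mulOp K n (X i), Algebra.subset_adjoin (Set.mem_union_left _ ⟨i, rfl⟩)⟩

/-- `∂^[α]`, as an element of `D(P_n)`. -/
noncomputable def hasseOp (α : Fin n →₀ ℕ) : DiffOps K n :=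
  ⟨hasse K n α, Algebra.subset_adjoin (Set.mem_union_right _ ⟨α, rfl⟩)⟩

/-- Every multiplication operator belongs to `D(P_n)`. -/
theorem mulOp_mem (f : MvPolynomial (Fin n) K) : mulOp K n f ∈ DiffOps K n := by
  have h : Algebra.adjoin K (Set.range (X : Fin n → MvPolynomial (Fin n) K)) ≤
      Subalgebra.comap (Algebra.lmul K (MvPolynomial (Fin n) K)) (DiffOps K n) := by
    rw [Algebra.adjoin_le_iff]
    rintro _ ⟨i, rfl⟩
    show Algebra.lmul K (MvPolynomial (Fin n) K) (X i) ∈ DiffOps K n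
    have : Algebra.lmul K (MvPolynomial (Fin n) K) (X i) = mulOp K n (X i) := by
      ext g
      simp [mulOp, Algebra.lmul, LinearMap.mulLeft_apply]
    rw [this]
    exact (xOp K n i).2
  have hf : f ∈ Algebra.adjoin K (Set.range (X : Fin n → MvPolynomial (Fin n) K)) := by
    rw [MvPolynomial.adjoin_range_X]; trivial
  have := h hf
  rw [Subalgebra.mem_comap] at this
  have he : Algebra.lmul K (MvPolynomial (Fin n) K) f = mulOp K n f := by
    ext g
    simp [mulOp, Algebra.lmul, LinearMap.mulLeft_apply]
  rwa [he] at this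

/-- The multiplication operator by `f`, as an element of `D(P_n)`. -/
noncomputable def mOp (f : MvPolynomial (Fin n) K) : DiffOps K n :=
  ⟨mulOp K n f, mulOp_mem K n f⟩

section Exponents

variable {σ : Type*} (p : ℕ)

lemma Finsupp.mapRange_mod_add_smul_mapRange_div (β : σ →₀ ℕ) :
    β.mapRange (· % p) (Nat.zero_mod p) + p • β.mapRange (· / p) (Nat.zero_div p) = β := by
  ext i
  simp [Nat.mod_add_div]

variable {p} {r : σ →₀ ℕ}

lemma Finsupp.mapRange_mod_add_smul (hr : ∀ i, r i < p) (q : σ →₀ ℕ) :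
    (r + p • q).mapRange (· % p) (Nat.zero_mod p) = r := by
  ext i
  simp [Nat.add_mul_mod_self_left, Nat.mod_eq_of_lt (hr i)]

lemma Finsupp.mapRange_div_add_smul (hr : ∀ i, r i < p) (q : σ →₀ ℕ) (hp : 0 < p) :
    (r + p • q).mapRange (· / p) (Nat.zero_div p) = q := by
  ext i
  simp [Nat.add_mul_div_left _ _ hp, Nat.div_eq_of_lt (hr i)]

end Exponents

section FrobeniusTwist

variable {σ R : Type*} [CommRing R] (p : ℕ)

lemma MvPolynomial.monomial_add_smul_one (r q : σ →₀ ℕ) :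
    monomial (r + p • q) (1 : R) = monomial r 1 * monomial q 1 ^ p := by
  rw [monomial_pow, monomial_mul, one_pow, mul_one]

lemma MvPolynomial.linearMap_ext_monomial_mul_pow {M : Type*} [AddCommMonoid M] [Module R M]
    (hp : 0 < p) {E₁ E₂ : MvPolynomial σ R →ₗ[R] M}
    (h : ∀ r q : σ →₀ ℕ, (∀ i, r i < p) →
      E₁ (monomial r 1 * monomial q 1 ^ p) = E₂ (monomial r 1 * monomial q 1 ^ p)) :
    E₁ = E₂ := by
  refine (basisMonomials σ R).ext fun β => ?_
  simp only [coe_basisMonomials]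
  rw [← Finsupp.mapRange_mod_add_smul_mapRange_div p β, monomial_add_smul_one]
  exact h _ _ fun i => Nat.mod_lt _ hp

/-- The operator `x^(r + p q) ↦ x^r (D x^q)^p` for `r < p` componentwise. -/
noncomputable def frobeniusTwist (D : Module.End R (MvPolynomial σ R)) :
    Module.End R (MvPolynomial σ R) :=
  (basisMonomials σ R).constr R fun β =>
    monomial (β.mapRange (· % p) (Nat.zero_mod p)) 1 *
      D (monomial (β.mapRange (· / p) (Nat.zero_div p)) 1) ^ p

lemma frobeniusTwist_monomial (D : Module.End R (MvPolynomial σ R)) (β : σ →₀ ℕ) :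
    frobeniusTwist p D (monomial β 1) =
      monomial (β.mapRange (· % p) (Nat.zero_mod p)) 1 *
        D (monomial (β.mapRange (· / p) (Nat.zero_div p)) 1) ^ p := by
  simpa [frobeniusTwist] using (basisMonomials σ R).constr_basis R _ β

variable [ExpChar R p] (D : Module.End R (MvPolynomial σ R))

lemma frobeniusTwist_monomial_mul_pow {r : σ →₀ ℕ} (hr : ∀ i, r i < p)
    (g : MvPolynomial σ R) :
    frobeniusTwist p D (monomial r 1 * g ^ p) = monomial r 1 * D g ^ p := by
  induction g using MvPolynomial.induction_on' with
  | monomial q a =>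
    have hmon : monomial q a = a • monomial q (1 : R) := by rw [smul_monomial, smul_eq_mul, mul_one]
    rw [hmon, smul_pow, mul_smul_comm, ← monomial_add_smul_one, map_smul, map_smul, smul_pow,
      mul_smul_comm, frobeniusTwist_monomial, Finsupp.mapRange_mod_add_smul hr,
      Finsupp.mapRange_div_add_smul hr _ (expChar_pos R p)]
  | add f g hf hg =>
    rw [add_pow_expChar, mul_add, map_add, hf, hg, map_add, add_pow_expChar, mul_add]

lemma frobeniusTwist_pow (g : MvPolynomial σ R) : frobeniusTwist p D (g ^ p) = D g ^ p := by
  simpa using frobeniusTwist_monomial_mul_pow p D (r := 0) (fun _ => expChar_pos R p) g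

lemma frobeniusTwist_mul (D₁ D₂ : Module.End R (MvPolynomial σ R)) :
    frobeniusTwist p (D₁ * D₂) = frobeniusTwist p D₁ * frobeniusTwist p D₂ :=
  linearMap_ext_monomial_mul_pow p (expChar_pos R p) fun r q hr => by
    simp only [Module.End.mul_apply, frobeniusTwist_monomial_mul_pow p _ hr]

lemma frobeniusTwist_add (D₁ D₂ : Module.End R (MvPolynomial σ R)) :
    frobeniusTwist p (D₁ + D₂) = frobeniusTwist p D₁ + frobeniusTwist p D₂ :=
  linearMap_ext_monomial_mul_pow p (expChar_pos R p) fun r q hr => by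
    simp only [LinearMap.add_apply, frobeniusTwist_monomial_mul_pow p _ hr, add_pow_expChar,
      mul_add]

lemma frobeniusTwist_mulLeft (f : MvPolynomial σ R) :
    frobeniusTwist p (LinearMap.mulLeft R f) = LinearMap.mulLeft R (f ^ p) :=
  linearMap_ext_monomial_mul_pow p (expChar_pos R p) fun r q hr => by
    simp only [frobeniusTwist_monomial_mul_pow p _ hr, LinearMap.mulLeft_apply]
    ring

lemma frobeniusTwist_one : frobeniusTwist p (1 : Module.End R (MvPolynomial σ R)) = 1 :=
  linearMap_ext_monomial_mul_pow p (expChar_pos R p) fun r q hr => by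
    simp only [frobeniusTwist_monomial_mul_pow p _ hr, Module.End.one_apply]

lemma frobeniusTwist_injective [IsReduced R] :
    Function.Injective (frobeniusTwist (σ := σ) (R := R) p) := fun D₁ D₂ h =>
  LinearMap.ext fun g => frobenius_inj _ p <| by
    simp only [frobenius_def, ← frobeniusTwist_pow, h]

variable (σ R) in
noncomputable def frobeniusTwistHom :
    Module.End R (MvPolynomial σ R) →+* Module.End R (MvPolynomial σ R) :=
  .mk' ⟨⟨frobeniusTwist p, frobeniusTwist_one p⟩, frobeniusTwist_mul p⟩ (frobeniusTwist_add p)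

end FrobeniusTwist

lemma Choose.choose_add_mul_mul_modEq_choose_nat {p r : ℕ} [Fact p.Prime] (hr : r < p)
    (b a : ℕ) : (r + p * b).choose (p * a) ≡ b.choose a [MOD p] := by
  have hp := (Fact.out : p.Prime).pos
  simpa [Nat.add_mul_mod_self_left, Nat.mod_eq_of_lt hr, Nat.add_mul_div_left _ _ hp,
    Nat.div_eq_of_lt hr, hp.ne'] using
    Choose.choose_modEq_choose_mod_mul_choose_div_nat (n := r + p * b) (k := p * a) (p := p)

lemma hasse_monomial (α β : Fin n →₀ ℕ) :
    hasse K n α (monomial β 1) = monomial (β - α) (∏ i, ((β i).choose (α i) : K)) := by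
  simpa [hasse, smul_monomial] using (basisMonomials (Fin n) K).constr_basis K _ β

variable {K n} {p : ℕ} [Fact p.Prime] [CharP K p]

lemma hasse_nsmul_monomial_mul_pow {r : Fin n →₀ ℕ} (hr : ∀ i, r i < p) (α q : Fin n →₀ ℕ) :
    hasse K n (p • α) (monomial r 1 * monomial q 1 ^ p) =
      monomial r 1 * hasse K n α (monomial q 1) ^ p := by
  have hcoeff : ∏ i, (((r + p • q) i).choose ((p • α) i) : K) =
      (∏ i, ((q i).choose (α i) : K)) ^ p := by
    rw [← frobenius_def, map_prod]
    refine Finset.prod_congr rfl fun i _ => ?_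
    rw [map_natCast]
    exact CharP.natCast_eq_natCast' K p
      (by simpa using Choose.choose_add_mul_mul_modEq_choose_nat (hr i) (q i) (α i))
  rw [← monomial_add_smul_one, hasse_monomial, hasse_monomial, hcoeff, monomial_pow,
    monomial_mul, one_mul]
  by_cases hα : ∀ i, α i ≤ q i
  · have hexp : r + p • q - p • α = r + p • (q - α) := by
      ext i
      simp [Nat.mul_sub, Nat.add_sub_assoc (Nat.mul_le_mul_left p (hα i))]
    rw [hexp]
  · obtain ⟨i, hi⟩ := not_forall.mp hα
    have hzero : (q i).choose (α i) = 0 := Nat.choose_eq_zero_of_lt (not_le.mp hi)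
    rw [Finset.prod_eq_zero (Finset.mem_univ i) (by simp [hzero]), zero_pow (NeZero.ne p),
      monomial_zero, monomial_zero]

lemma frobeniusTwist_hasse (α : Fin n →₀ ℕ) :
    frobeniusTwist p (hasse K n α) = hasse K n (p • α) :=
  linearMap_ext_monomial_mul_pow p (NeZero.pos p) fun r q hr => by
    rw [frobeniusTwist_monomial_mul_pow p _ hr, hasse_nsmul_monomial_mul_pow hr]

lemma frobeniusTwist_mulOp (f : MvPolynomial (Fin n) K) :
    frobeniusTwist p (mulOp K n f) = mulOp K n (f ^ p) :=
  frobeniusTwist_mulLeft p f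

lemma frobeniusTwist_mem_diffOps {D : Module.End K (MvPolynomial (Fin n) K)}
    (hD : D ∈ DiffOps K n) : frobeniusTwist p D ∈ DiffOps K n := by
  induction hD using Algebra.adjoin_induction with
  | mem D hD =>
    rcases hD with ⟨i, rfl⟩ | ⟨α, rfl⟩
    · rw [frobeniusTwist_mulOp]
      exact mulOp_mem K n _
    · rw [frobeniusTwist_hasse]
      exact (hasseOp K n (p • α)).2
  | algebraMap c =>
    have hc : algebraMap K (Module.End K (MvPolynomial (Fin n) K)) c = mulOp K n (C c) :=
      LinearMap.ext fun g => by simp [mulOp, smul_eq_C_mul]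
    rw [hc, frobeniusTwist_mulOp]
    exact mulOp_mem K n _
  | add D₁ D₂ _ _ h₁ h₂ =>
    rw [frobeniusTwist_add]
    exact add_mem h₁ h₂
  | mul D₁ D₂ _ _ h₁ h₂ =>
    rw [frobeniusTwist_mul]
    exact mul_mem h₁ h₂

/-- **The canonical Frobenius on `D(P_n)`.**
Let `K` be a field of characteristic `p > 0`.  There exists an injective ring
homomorphism `F_x : D(P_n) → D(P_n)` with `F_x(f) = f^p` for every multiplication
operator `f ∈ P_n` and `F_x(∂^[α]) = ∂^[pα]` for every `α ∈ ℕⁿ`; it extends the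
Frobenius `a ↦ a^p` of `P_n`. -/
theorem canonical_frobenius_exists
    {K : Type*} [Field K] {n : ℕ} (p : ℕ) (hp : 0 < p) [CharP K p] :
    ∃ F : DiffOps K n →+* DiffOps K n,
      Function.Injective F ∧
      (∀ f : MvPolynomial (Fin n) K, F (mOp K n f) = mOp K n (f ^ p)) ∧
      (∀ α : Fin n →₀ ℕ, F (hasseOp K n α) = hasseOp K n (p • α)) := by
  have : NeZero p := ⟨hp.ne'⟩
  have : Fact p.Prime := CharP.char_is_prime_of_pos K p
  refine ⟨(frobeniusTwistHom (Fin n) K p).restrict _ _ fun D hD => frobeniusTwist_mem_diffOps hD,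
    fun D₁ D₂ h => Subtype.ext (frobeniusTwist_injective p congr(($h).1)),
    fun f => Subtype.ext (frobeniusTwist_mulOp f),
    fun α => Subtype.ext (frobeniusTwist_hasse α)⟩
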